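/- For any privately achievable scheme with zero error and zero leakage, and for any s ∈ {1,...,min(⌊N/2⌋,K)} with ⌊N/s⌋ ≥ 2, the rate satisfies R ≥ (s·⌊N/s⌋ − 1 − (s−1)M)/(⌊N/s⌋ − 1); formally, given random variables satisfying H(W_{[s⌊N/s⌋]} | X_{[⌊N/s⌋]}, Z_{[s]}) = 0, I(Ŵ; X_l, Z_k) = 0, H(X_i) ≤ RF, H(Z_j) ≤ MF, and W_1,...,W_N i.i.d. uniform on F bits, conclude (s⌊N/s⌋−1)F ≤ (⌊N/s⌋−1)RF + (s−1)MF. -/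

import Mathlib

open scoped BigOperators

/-- Probability that random variable `X` takes value `x`, on a finite
probability space with mass function `p`. -/
noncomputable def probOf {Ω α : Type*} [Fintype Ω] [DecidableEq α]
    (p : Ω → ℝ) (X : Ω → α) (x : α) : ℝ :=
  ∑ ω, if X ω = x then p ω else 0

/-- Shannon entropy (in bits) of a random variable on a finite probability space. -/
noncomputable def entropy {Ω α : Type*} [Fintype Ω] [Fintype α] [DecidableEq α]
    (p : Ω → ℝ) (X : Ω → α) : ℝ :=
  -∑ x, probOf p X x * Real.logb 2 (probOf p X x)

/-- Conditional entropy H(X | Y). -/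
noncomputable def condEntropy {Ω α β : Type*} [Fintype Ω] [Fintype α] [DecidableEq α]
    [Fintype β] [DecidableEq β] (p : Ω → ℝ) (X : Ω → α) (Y : Ω → β) : ℝ :=
  entropy p (fun ω => (X ω, Y ω)) - entropy p Y

/-- Mutual information I(X ; Y). -/
noncomputable def mutualInfo {Ω α β : Type*} [Fintype Ω] [Fintype α] [DecidableEq α]
    [Fintype β] [DecidableEq β] (p : Ω → ℝ) (X : Ω → α) (Y : Ω → β) : ℝ :=
  entropy p X - condEntropy p X Y

/-! With `n = ⌊N/s⌋`, let `Ŵ` be the demanded files other than the first one. Privacy gives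
`H(Ŵ) = H(Ŵ | X₀, Z₀)`, and since all demanded files are recovered from all transmissions and
caches `(X, Z)`, the triple `(Ŵ, X₀, Z₀)` carries no more information than `(X, Z)`; hence
`H(Ŵ) ≤ H(X, Z) − H(X₀, Z₀)`. Subadditivity bounds the right side by the entropies of the other
`n − 1` transmissions and `s − 1` caches. -/

open Finset

section Entropy

variable {Ω : Type*} [Fintype Ω] {p : Ω → ℝ}

lemma probOf_nonneg (hp0 : ∀ ω, 0 ≤ p ω) {α : Type*} [DecidableEq α] (X : Ω → α) (x : α) :
    0 ≤ probOf p X x :=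
  sum_nonneg fun ω _ => ite_nonneg (hp0 ω) le_rfl

lemma sum_probOf (hp1 : ∑ ω, p ω = 1) {α : Type*} [Fintype α] [DecidableEq α] (X : Ω → α) :
    ∑ x, probOf p X x = 1 := by
  rw [← hp1]
  unfold probOf
  rw [sum_comm]
  simp

lemma probOf_comp {α α' : Type*} [Fintype α] [DecidableEq α] [DecidableEq α']
    (X : Ω → α) (f : α → α') (y : α') :
    probOf p (fun ω => f (X ω)) y = ∑ x with f x = y, probOf p X x := by
  unfold probOf
  rw [sum_comm]
  simp

lemma probOf_le_probOf_comp (hp0 : ∀ ω, 0 ≤ p ω) {α α' : Type*} [Fintype α] [DecidableEq α]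
    [DecidableEq α'] (X : Ω → α) (f : α → α') (x : α) :
    probOf p X x ≤ probOf p (fun ω => f (X ω)) (f x) := by
  rw [probOf_comp X f]
  exact single_le_sum (fun x _ => probOf_nonneg hp0 X x) (by simp)

lemma sum_probOf_mul_comp {α α' : Type*} [Fintype α] [DecidableEq α] [Fintype α']
    [DecidableEq α'] (X : Ω → α) (f : α → α') (g : α' → ℝ) :
    ∑ x, probOf p X x * g (f x) = ∑ y, probOf p (fun ω => f (X ω)) y * g y := by
  rw [← sum_fiberwise univ f]
  refine sum_congr rfl fun y _ => ?_
  rw [probOf_comp, sum_mul]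
  exact sum_congr rfl fun x hx => by rw [(mem_filter.mp hx).2]

lemma mul_log_le_mul_log_add_sub {r u : ℝ} (hr : 0 ≤ r) (hu : 0 ≤ u) (hru : 0 < r → 0 < u) :
    r * Real.log u ≤ r * Real.log r + (u - r) := by
  rcases hr.eq_or_lt with rfl | hr
  · simpa using hu
  replace hu := hru hr
  have := mul_le_mul_of_nonneg_left (Real.log_le_sub_one_of_pos (div_pos hu hr)) hr.le
  rw [Real.log_div hu.ne' hr.ne', mul_sub, mul_sub, mul_div_cancel₀ _ hr.ne'] at this
  linarith

lemma sum_mul_logb_le_sum_mul_logb {ι : Type*} [Fintype ι] {r u : ι → ℝ}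
    (hr : ∀ i, 0 ≤ r i) (hu : ∀ i, 0 ≤ u i) (hru : ∀ i, 0 < r i → 0 < u i)
    (hsum : ∑ i, u i ≤ ∑ i, r i) :
    ∑ i, r i * Real.logb 2 (u i) ≤ ∑ i, r i * Real.logb 2 (r i) := by
  have hlog : ∑ i, r i * Real.log (u i) ≤ ∑ i, r i * Real.log (r i) :=
    calc ∑ i, r i * Real.log (u i) ≤ ∑ i, (r i * Real.log (r i) + (u i - r i)) :=
          sum_le_sum fun i _ => mul_log_le_mul_log_add_sub (hr i) (hu i) (hru i)
      _ ≤ ∑ i, r i * Real.log (r i) := by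
          rw [sum_add_distrib, sum_sub_distrib]
          linarith
  simp only [Real.logb, mul_div_assoc', ← sum_div]
  exact div_le_div_of_nonneg_right hlog (Real.log_pos one_lt_two).le

lemma entropy_le_of_eq_comp (hp0 : ∀ ω, 0 ≤ p ω) {α α' : Type*} [Fintype α] [DecidableEq α]
    [Fintype α'] [DecidableEq α'] (X : Ω → α) {Y : Ω → α'} (f : α → α')
    (hf : ∀ ω, Y ω = f (X ω)) :
    entropy p Y ≤ entropy p X := by
  obtain rfl : Y = fun ω => f (X ω) := funext hf
  unfold entropy
  rw [neg_le_neg_iff, ← sum_probOf_mul_comp X f]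
  refine sum_le_sum fun x _ => ?_
  rcases (probOf_nonneg hp0 X x).eq_or_lt with h | h
  · simp [← h]
  · exact mul_le_mul_of_nonneg_left
      (Real.logb_le_logb_of_le one_lt_two h (probOf_le_probOf_comp hp0 X f x)) h.le

lemma entropy_prod_le_add (hp0 : ∀ ω, 0 ≤ p ω) (hp1 : ∑ ω, p ω = 1) {α β : Type*}
    [Fintype α] [DecidableEq α] [Fintype β] [DecidableEq β] (X : Ω → α) (Y : Ω → β) :
    entropy p (fun ω => (X ω, Y ω)) ≤ entropy p X + entropy p Y := by
  let r := probOf p (fun ω => (X ω, Y ω))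
  have hrX : ∀ z, r z ≤ probOf p X z.1 := probOf_le_probOf_comp hp0 _ Prod.fst
  have hrY : ∀ z, r z ≤ probOf p Y z.2 := probOf_le_probOf_comp hp0 _ Prod.snd
  have hgibbs : ∑ z, r z * Real.logb 2 (probOf p X z.1 * probOf p Y z.2)
      ≤ ∑ z, r z * Real.logb 2 (r z) := by
    refine sum_mul_logb_le_sum_mul_logb (fun z => probOf_nonneg hp0 _ z)
      (fun z => mul_nonneg (probOf_nonneg hp0 X _) (probOf_nonneg hp0 Y _))
      (fun z hz => mul_pos (hz.trans_le (hrX z)) (hz.trans_le (hrY z))) ?_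
    rw [Fintype.sum_prod_type, ← sum_mul_sum, sum_probOf hp1, sum_probOf hp1,
      sum_probOf hp1 (fun ω => (X ω, Y ω))]
    norm_num
  have hsplit : ∀ z, r z * Real.logb 2 (probOf p X z.1 * probOf p Y z.2)
      = r z * Real.logb 2 (probOf p X z.1) + r z * Real.logb 2 (probOf p Y z.2) := by
    intro z
    rcases (probOf_nonneg hp0 (fun ω => (X ω, Y ω)) z).eq_or_lt with h | h
    · simp [r, ← h]
    · rw [Real.logb_mul (h.trans_le (hrX z)).ne' (h.trans_le (hrY z)).ne', mul_add]
  have hX := sum_probOf_mul_comp (p := p) (fun ω => (X ω, Y ω)) Prod.fst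
    fun x => Real.logb 2 (probOf p X x)
  have hY := sum_probOf_mul_comp (p := p) (fun ω => (X ω, Y ω)) Prod.snd
    fun y => Real.logb 2 (probOf p Y y)
  rw [sum_congr rfl fun z _ => hsplit z, sum_add_distrib] at hgibbs
  unfold entropy
  linarith

lemma entropy_eq_zero_of_unique (hp1 : ∑ ω, p ω = 1) {α : Type*} [Fintype α] [DecidableEq α]
    [Unique α] (X : Ω → α) :
    entropy p X = 0 := by
  have h := sum_probOf hp1 X
  rw [univ_unique, sum_singleton] at h
  simp [entropy, h]

lemma entropy_le_sub_of_mutualInfo_eq_zero_of_condEntropy_eq_zero (hp0 : ∀ ω, 0 ≤ p ω)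
    {α β γ δ : Type*} [Fintype α] [DecidableEq α] [Fintype β] [DecidableEq β]
    [Fintype γ] [DecidableEq γ] [Fintype δ] [DecidableEq δ]
    {V : Ω → α} {T : Ω → β} {W : Ω → γ} {C : Ω → δ}
    (hrec : condEntropy p W C = 0) (hpriv : mutualInfo p V T = 0) (f : γ → α) (g : δ → β)
    (hV : ∀ ω, V ω = f (W ω)) (hT : ∀ ω, T ω = g (C ω)) :
    entropy p V ≤ entropy p C - entropy p T := by
  have hVT : entropy p (fun ω => (V ω, T ω)) ≤ entropy p (fun ω => (W ω, C ω)) :=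
    entropy_le_of_eq_comp hp0 _ (Prod.map f g) fun ω => by simp [hV, hT]
  unfold mutualInfo condEntropy at *
  linarith

end Entropy

section Families

variable {Ω : Type*} [Fintype Ω] {p : Ω → ℝ} {ι : Type*} [DecidableEq ι]

lemma exists_comp_eq_restrict_of_subset_insert {α : Type*} {A B : Finset ι} {a : ι}
    (h : A ⊆ insert a B) :
    ∃ g : α × (B → α) → (A → α), ∀ x : ι → α, g (x a, fun i : B => x i) = fun i : A => x i := by
  refine ⟨fun v i => if hi : (i : ι) = a then v.1 else
    v.2 ⟨i, (mem_insert.mp (h i.2)).resolve_left hi⟩, fun x => funext fun i => ?_⟩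
  dsimp only
  split_ifs with hi
  · rw [hi]
  · rfl

lemma entropy_pi_le_sum (hp0 : ∀ ω, 0 ≤ p ω) (hp1 : ∑ ω, p ω = 1) {α : Type*} [Fintype α]
    [DecidableEq α] (X : ι → Ω → α) (A : Finset ι) :
    entropy p (fun ω (i : A) => X i ω) ≤ ∑ i ∈ A, entropy p (X i) := by
  induction A using Finset.induction with
  | empty =>
    have : IsEmpty (∅ : Finset ι) := Finset.isEmpty_coe_sort.mpr rfl
    simp [entropy_eq_zero_of_unique hp1]
  | @insert a B ha ih =>
    obtain ⟨g, hg⟩ :=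
      exists_comp_eq_restrict_of_subset_insert (α := α) (subset_refl (insert a B))
    calc entropy p (fun ω (i : (insert a B : Finset ι)) => X i ω)
        ≤ entropy p (fun ω => (X a ω, fun i : B => X i ω)) :=
          entropy_le_of_eq_comp hp0 _ g fun ω => (hg fun i => X i ω).symm
      _ ≤ entropy p (X a) + ∑ i ∈ B, entropy p (X i) :=
          (entropy_prod_le_add hp0 hp1 _ _).trans (add_le_add le_rfl ih)
      _ = ∑ i ∈ insert a B, entropy p (X i) := by rw [sum_insert ha]

lemma entropy_prod_pi_le_add_sum (hp0 : ∀ ω, 0 ≤ p ω) (hp1 : ∑ ω, p ω = 1) {α β : Type*}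
    [Fintype α] [DecidableEq α] [Fintype β] [DecidableEq β] {A B : Finset ι} {a b : ι}
    (X : ι → Ω → α) (Z : ι → Ω → β) :
    entropy p (fun ω => (fun i : A => X i ω, fun j : B => Z j ω))
      ≤ entropy p (fun ω => (X a ω, Z b ω))
        + (∑ i ∈ A.erase a, entropy p (X i) + ∑ j ∈ B.erase b, entropy p (Z j)) := by
  obtain ⟨gX, hgX⟩ :=
    exists_comp_eq_restrict_of_subset_insert (α := α) (insert_erase_subset a A)
  obtain ⟨gZ, hgZ⟩ :=
    exists_comp_eq_restrict_of_subset_insert (α := β) (insert_erase_subset b B)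
  calc entropy p (fun ω => (fun i : A => X i ω, fun j : B => Z j ω))
      ≤ entropy p (fun ω => ((X a ω, Z b ω),
          (fun i : A.erase a => X i ω, fun j : B.erase b => Z j ω))) :=
        entropy_le_of_eq_comp hp0 _ (fun v => (gX (v.1.1, v.2.1), gZ (v.1.2, v.2.2)))
          fun ω => Prod.ext (hgX fun i => X i ω).symm (hgZ fun j => Z j ω).symm
    _ ≤ _ := (entropy_prod_le_add hp0 hp1 _ _).trans <| add_le_add le_rfl <|
        (entropy_prod_le_add hp0 hp1 _ _).trans <|
          add_le_add (entropy_pi_le_sum hp0 hp1 X _) (entropy_pi_le_sum hp0 hp1 Z _)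

end Families

lemma sum_erase_zero_range_le {f : ℕ → ℝ} {c : ℝ} {n : ℕ} (hn : 0 < n) (hf : ∀ i, f i ≤ c) :
    ∑ i ∈ (range n).erase 0, f i ≤ ((n : ℝ) - 1) * c := by
  refine (sum_le_card_nsmul _ _ _ fun i _ => hf i).trans_eq ?_
  rw [card_erase_of_mem (mem_range.mpr hn), card_range, nsmul_eq_mul, Nat.cast_pred hn]

theorem private_caching_cutset_bound_general
    {Ω α β γ : Type*} [Fintype Ω] [Fintype α] [DecidableEq α]
    [Fintype β] [DecidableEq β] [Fintype γ] [DecidableEq γ]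
    (p : Ω → ℝ) (hp0 : ∀ ω, 0 ≤ p ω) (hp1 : ∑ ω, p ω = 1)
    (N s : ℕ) (F R M : ℝ)
    (hn2 : 2 ≤ N / s)
    (W : ℕ → Ω → α) (X : ℕ → Ω → β) (Z : ℕ → Ω → γ)
    -- the files W₁,…,W_N are i.i.d. uniform on F bits: any subcollection has
    -- joint entropy (number of files)·F
    (hWiid : ∀ A : Finset ℕ, A ⊆ Finset.range N →
      entropy p (fun ω => fun i : A => W i ω) = A.card * F)
    -- recovery: all demanded files are determined by all transmissions and caches
    (hrec : condEntropy p (fun ω => fun i : Finset.range (s * (N / s)) => W (i : ℕ) ω)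
      (fun ω => (fun i : Finset.range (N / s) => X (i : ℕ) ω,
                 fun j : Finset.range s => Z (j : ℕ) ω)) = 0)
    -- privacy: (Xₗ, Z_k) reveal nothing about the files other than the one
    -- demanded by user k in request instance l (0-indexed: index l·s + k)
    (hpriv : ∀ l k : ℕ, l < N / s → k < s →
      mutualInfo p
        (fun ω => fun i : ((Finset.range (s * (N / s))).erase (l * s + k)) => W (i : ℕ) ω)
        (fun ω => (X l ω, Z k ω)) = 0)
    (hX : ∀ i, entropy p (X i) ≤ R * F)
    (hZ : ∀ j, entropy p (Z j) ≤ M * F) :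
    ((s * (N / s) : ℕ) - 1 : ℝ) * F ≤ ((N / s : ℕ) - 1 : ℝ) * R * F + ((s : ℝ) - 1) * M * F := by
  have hn : 0 < N / s := by omega
  have hs : 0 < s := Nat.pos_of_ne_zero fun h => by simp [h] at hn2
  have hsn : 0 < s * (N / s) := Nat.mul_pos hs hn
  have h00 : 0 * s + 0 ∈ range (s * (N / s)) := mem_range.mpr (by simpa using hsn)
  have hfiles := hWiid _ ((erase_subset (0 * s + 0) (range (s * (N / s)))).trans
    (range_subset_range.mpr (Nat.mul_div_le N s)))
  rw [card_erase_of_mem h00, card_range, Nat.cast_pred hsn] at hfiles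
  have hcut := entropy_le_sub_of_mutualInfo_eq_zero_of_condEntropy_eq_zero hp0
    hrec (hpriv 0 0 hn hs) (fun w i => w ⟨i, mem_of_mem_erase i.2⟩)
    (fun c => (c.1 ⟨0, mem_range.mpr hn⟩, c.2 ⟨0, mem_range.mpr hs⟩)) (fun _ => rfl) (fun _ => rfl)
  have hcaches :=
    entropy_prod_pi_le_add_sum hp0 hp1 (A := range (N / s)) (B := range s) (a := 0) (b := 0) X Z
  have hXs := sum_erase_zero_range_le hn hX
  have hZs := sum_erase_zero_range_le hs hZ
  linarith

/-- Cut-set lower bound for private coded caching: with `n = ⌊N/s⌋` request instances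
and `s` users, zero-error recovery, perfect privacy, `H(Xᵢ) ≤ RF` and `H(Zⱼ) ≤ MF`,
one gets `(s⌊N/s⌋ − 1)F ≤ (⌊N/s⌋ − 1)RF + (s − 1)MF`. -/
theorem private_caching_cutset_bound
    {Ω α β γ : Type*} [Fintype Ω] [Fintype α] [DecidableEq α]
    [Fintype β] [DecidableEq β] [Fintype γ] [DecidableEq γ]
    (p : Ω → ℝ) (hp0 : ∀ ω, 0 ≤ p ω) (hp1 : ∑ ω, p ω = 1)
    (N K s : ℕ) (F R M : ℝ) (hF : 0 < F)
    (hs1 : 1 ≤ s) (hs2 : s ≤ min (N / 2) K) (hn2 : 2 ≤ N / s)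
    (W : ℕ → Ω → α) (X : ℕ → Ω → β) (Z : ℕ → Ω → γ)
    -- the files W₁,…,W_N are i.i.d. uniform on F bits: any subcollection has
    -- joint entropy (number of files)·F
    (hWiid : ∀ A : Finset ℕ, A ⊆ Finset.range N →
      entropy p (fun ω => fun i : A => W i ω) = A.card * F)
    -- recovery: all demanded files are determined by all transmissions and caches
    (hrec : condEntropy p (fun ω => fun i : Finset.range (s * (N / s)) => W (i : ℕ) ω)
      (fun ω => (fun i : Finset.range (N / s) => X (i : ℕ) ω,
                 fun j : Finset.range s => Z (j : ℕ) ω)) = 0)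
    -- privacy: (Xₗ, Z_k) reveal nothing about the files other than the one
    -- demanded by user k in request instance l (0-indexed: index l·s + k)
    (hpriv : ∀ l k : ℕ, l < N / s → k < s →
      mutualInfo p
        (fun ω => fun i : ((Finset.range (s * (N / s))).erase (l * s + k)) => W (i : ℕ) ω)
        (fun ω => (X l ω, Z k ω)) = 0)
    (hX : ∀ i, entropy p (X i) ≤ R * F)
    (hZ : ∀ j, entropy p (Z j) ≤ M * F) :
    ((s * (N / s) : ℕ) - 1 : ℝ) * F ≤ ((N / s : ℕ) - 1 : ℝ) * R * F + ((s : ℝ) - 1) * M * F :=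
  private_caching_cutset_bound_general p hp0 hp1 N s F R M hn2 W X Z hWiid hrec hpriv hX hZ
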